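/- arXiv:math/0406599 — 3 statements merged into one kernel-verified Lean document; each statement's English description precedes it below -/
import Mathlib

section
/- Let k be a field and let S be a normal integral scheme over k. Let V and Ṽ be S-schemes and let v : Ṽ → V be a finite S-morphism. Let h : S → V be a section of the structural morphism V → S. Suppose there is a nonempty open subscheme S' of S such that the restriction h' of h to S' lifts through v, i.e. there is an S-morphism h̃' : S' → Ṽ with v ∘ h̃' = h'. Then h̃' extends uniquely to an S-morphism h̃ : S → Ṽ satisfying v ∘ h̃ = h (and h̃|_{S'} = h̃'). -/
/-!
A lift of `h` through `v` on `S'` is determined by its value `ξ` at the generic point. Near a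
point `s`, pick an affine `V₀ ∋ h s`: then `ξ` is a ring map `Γ(Ṽ, v⁻¹ V₀) → K(S)` over
`Γ(V, V₀) → 𝒪_{S,s}`. Since `Γ(Ṽ, v⁻¹ V₀)` is finite over `Γ(V, V₀)`, its image is integral over
the integrally closed ring `𝒪_{S,s}`, hence lies in it; this lifts `h` on `Spec 𝒪_{S,s}`, and
as `v` is of finite type the lift spreads out to a neighbourhood of `s`. As `S` is reduced and
`v` is separated, lifts agreeing at the dense generic point agree on overlaps, so they glue, and
the glued lift is unique.
-/

open AlgebraicGeometry CategoryTheory CategoryTheory.Limits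

theorem RingHom.IsIntegral.exists_lift_of_isIntegrallyClosedIn {A B R K : Type*}
    [CommRing A] [CommRing B] [CommRing R] [CommRing K] [Algebra R K]
    [IsIntegrallyClosedIn R K] {f : A →+* B} (hf : f.IsIntegral) (ρ : A →+* R) (ψ : B →+* K)
    (hψ : ψ.comp f = (algebraMap R K).comp ρ) :
    ∃ ψ' : B →+* R, (algebraMap R K).comp ψ' = ψ ∧ ψ'.comp f = ρ := by
  let _ := f.toAlgebra
  have hint (b : B) : _root_.IsIntegral R (ψ b) :=
    (show _root_.IsIntegral A b from hf b).map_of_comp_eq ρ ψ hψ.symm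
  have inj := IsIntegralClosure.algebraMap_injective R R K
  let ψ' : B →+* R :=
    { toFun b := IsIntegralClosure.mk' R (ψ b) (hint b)
      map_one' := inj (by simp only [IsIntegralClosure.algebraMap_mk', map_one])
      map_mul' x y := inj (by simp only [IsIntegralClosure.algebraMap_mk', map_mul])
      map_zero' := inj (by simp only [IsIntegralClosure.algebraMap_mk', map_zero])
      map_add' x y := inj (by simp only [IsIntegralClosure.algebraMap_mk', map_add]) }
  have hψ' : (algebraMap R K).comp ψ' = ψ :=
    RingHom.ext fun b ↦ IsIntegralClosure.algebraMap_mk' R _ (hint b)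
  refine ⟨ψ', hψ', RingHom.ext fun a ↦ inj ?_⟩
  simpa [← hψ'] using RingHom.congr_fun hψ a

namespace AlgebraicGeometry

instance Scheme.isDominant_fromSpecStalk_genericPoint (S : Scheme) [IrreducibleSpace S] :
    IsDominant (S.fromSpecStalk (genericPoint S)) :=
  ⟨(dense_iff_closure_eq.mpr (genericPoint_spec S)).mono <| Set.singleton_subset_iff.mpr
    ⟨IsLocalRing.closedPoint _, Scheme.fromSpecStalk_closedPoint⟩⟩

lemma IsAffineOpen.exists_SpecMap_comp_fromSpec {R : CommRingCat} {X : Scheme}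
    (f : Spec R ⟶ X) {W : X.Opens} (hW : IsAffineOpen W) (hf : ∀ x, f x ∈ W) :
    ∃ φ : Γ(X, W) ⟶ R, Spec.map φ ≫ hW.fromSpec = f := by
  have hf' : ⊤ ≤ f ⁻¹ᵁ W := fun x _ ↦ hf x
  refine ⟨f.appLE W ⊤ hf' ≫ (Scheme.ΓSpecIso R).hom, ?_⟩
  rw [Spec.map_comp, Category.assoc, hW.SpecMap_appLE_fromSpec f (isAffineOpen_top _),
    IsAffineOpen.fromSpec_top, Scheme.isoSpec_Spec_inv, ← Category.assoc, ← Spec.map_comp,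
    Iso.inv_hom_id, Spec.map_id, Category.id_comp]

lemma Scheme.exists_stalk_lift_of_isFinite {S V Vt : Scheme} [IsIntegral S] (v : Vt ⟶ V)
    [IsFinite v] (h : S ⟶ V) (ξ : Spec S.functionField ⟶ Vt)
    (hξ : ξ ≫ v = S.fromSpecStalk (genericPoint S) ≫ h) (s : S)
    (hs : IsIntegrallyClosed (S.presheaf.stalk s)) :
    ∃ φ : Spec (S.presheaf.stalk s) ⟶ Vt, φ ≫ v = S.fromSpecStalk s ≫ h ∧
      Spec.map (S.presheaf.stalkSpecializes ((genericPoint_spec S).specializes trivial)) ≫ φ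
        = ξ := by
  set σ := S.presheaf.stalkSpecializes ((genericPoint_spec S).specializes trivial)
  rw [← Scheme.SpecMap_stalkSpecializes_fromSpecStalk
    ((genericPoint_spec S).specializes trivial), Category.assoc] at hξ
  obtain ⟨_, ⟨V₀, hV₀ : IsAffineOpen V₀, rfl⟩, hsV₀, -⟩ :=
    V.isBasis_affineOpens.exists_subset_of_mem_open (Set.mem_univ (h s)) isOpen_univ
  have hW₀ : IsAffineOpen (v ⁻¹ᵁ V₀) := hV₀.preimage v
  -- `Spec 𝒪_{S,s}` maps onto the generizations of `s`, all of which lie in the open `h⁻¹ V₀`.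
  have hmaps (y : Spec (S.presheaf.stalk s)) : h (S.fromSpecStalk s y) ∈ V₀ := by
    have hy : S.fromSpecStalk s y ∈ {x | x ⤳ s} :=
      Scheme.range_fromSpecStalk ▸ Set.mem_range_self y
    exact (hy.map h.continuous).mem_open V₀.2 hsV₀
  obtain ⟨ρ, hρ⟩ := hV₀.exists_SpecMap_comp_fromSpec (S.fromSpecStalk s ≫ h) hmaps
  obtain ⟨ψ, hψ⟩ := hW₀.exists_SpecMap_comp_fromSpec ξ fun y ↦ by
    change v (ξ y) ∈ V₀
    rw [← Scheme.Hom.comp_apply, hξ]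
    exact hmaps _
  set a := v.appLE V₀ (v ⁻¹ᵁ V₀) le_rfl
  have hcomm : a ≫ ψ = ρ ≫ σ := by
    apply Spec.map_injective
    rw [← cancel_mono hV₀.fromSpec, Spec.map_comp, Spec.map_comp, Category.assoc, Category.assoc,
      hV₀.SpecMap_appLE_fromSpec v hW₀ le_rfl, hρ, ← Category.assoc, hψ, hξ]
  have ha : a.hom.IsIntegral := by
    have := v.finite_app V₀ hV₀
    rw [Scheme.Hom.app_eq_appLE] at this
    exact this.to_isIntegral
  have := (isIntegrallyClosed_iff_isIntegrallyClosedIn S.functionField).mp hs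
  obtain ⟨ψ', hψ'σ, haψ'⟩ := ha.exists_lift_of_isIntegrallyClosedIn ρ.hom ψ.hom
    congr(($hcomm).hom)
  let ψ'' : Γ(Vt, v ⁻¹ᵁ V₀) ⟶ S.presheaf.stalk s := CommRingCat.ofHom ψ'
  have hψ''σ : ψ'' ≫ σ = ψ := CommRingCat.hom_ext hψ'σ
  have haψ'' : a ≫ ψ'' = ρ := CommRingCat.hom_ext haψ'
  refine ⟨Spec.map ψ'' ≫ hW₀.fromSpec, ?_, ?_⟩
  · rw [Category.assoc, ← hV₀.SpecMap_appLE_fromSpec v hW₀ le_rfl, ← Category.assoc,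
      ← Spec.map_comp, haψ'', hρ]
  · rw [← Category.assoc, ← Spec.map_comp, hψ''σ, hψ]

lemma Scheme.exists_local_lift_of_isFinite {S V Vt : Scheme} [IsIntegral S] (v : Vt ⟶ V)
    [IsFinite v] (h : S ⟶ V) (ξ : Spec S.functionField ⟶ Vt)
    (hξ : ξ ≫ v = S.fromSpecStalk (genericPoint S) ≫ h) (s : S)
    (hs : IsIntegrallyClosed (S.presheaf.stalk s)) :
    ∃ (U : S.Opens) (_ : s ∈ U) (f : U.toScheme ⟶ Vt) (γ : Spec S.functionField ⟶ U.toScheme),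
      f ≫ v = U.ι ≫ h ∧ γ ≫ U.ι = S.fromSpecStalk (genericPoint S) ∧ γ ≫ f = ξ := by
  obtain ⟨φ, hφv, hφξ⟩ := exists_stalk_lift_of_isFinite v h ξ hξ s hs
  obtain ⟨U, hsU, f, rfl, hfv⟩ := spread_out_of_isGermInjective' h v φ hφv
  refine ⟨U, hsU, f, _ ≫ U.fromSpecStalkOfMem s hsU, hfv, ?_, by rw [Category.assoc, hφξ]⟩
  rw [Category.assoc, Scheme.Opens.fromSpecStalkOfMem_ι,
    Scheme.SpecMap_stalkSpecializes_fromSpecStalk]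

lemma Scheme.exists_lift_of_isDominant_of_local_lifts {X T Y Z : Scheme} [IsReduced X] (g : T ⟶ X)
    [IsDominant g] (v : Y ⟶ Z) [IsSeparated v] (h : X ⟶ Z) (ξ : T ⟶ Y)
    (H : ∀ x : X, ∃ (U : X.Opens) (_ : x ∈ U) (f : U.toScheme ⟶ Y) (γ : T ⟶ U.toScheme),
      f ≫ v = U.ι ≫ h ∧ γ ≫ U.ι = g ∧ γ ≫ f = ξ) :
    ∃ f : X ⟶ Y, f ≫ v = h ∧ g ≫ f = ξ := by
  choose U hxU f γ hfv hγ hγf using H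
  let 𝒰 : X.OpenCover := Scheme.Cover.mkOfCovers X (fun x ↦ (U x).toScheme) (fun x ↦ (U x).ι)
    fun x ↦ ⟨x, ⟨x, hxU x⟩, rfl⟩
  -- Two local lifts agree on an overlap since they agree on the dense image of `T`.
  have compat (x y : X) :
      pullback.fst (U x).ι (U y).ι ≫ f x = pullback.snd (U x).ι (U y).ι ≫ f y := by
    have : IsReduced (pullback (U x).ι (U y).ι) := isReduced_of_isOpenImmersion (pullback.fst _ _)
    let ι := pullback.lift (γ x) (γ y) (by rw [hγ, hγ])
    have : IsDominant (ι ≫ pullback.fst (U x).ι (U y).ι ≫ (U x).ι) := by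
      rwa [pullback.lift_fst_assoc, hγ]
    have : IsDominant ι := IsDominant.of_comp_of_isOpenImmersion (g := pullback.fst _ _ ≫ (U x).ι) ι
    refine ext_of_isDominant_of_isSeparated v ?_ ι ?_
    · rw [Category.assoc, hfv, Category.assoc, hfv, pullback.condition_assoc]
    · rw [pullback.lift_fst_assoc, pullback.lift_snd_assoc, hγf, hγf]
  have hglue (x : X) : (U x).ι ≫ 𝒰.glueMorphisms f compat = f x := 𝒰.ι_glueMorphisms f compat x
  refine ⟨𝒰.glueMorphisms f compat, 𝒰.hom_ext _ _ fun x ↦ ?_, ?_⟩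
  · change (U x).ι ≫ _ ≫ v = (U x).ι ≫ h
    rw [reassoc_of% hglue x]
    exact hfv x
  · rcases isEmpty_or_nonempty T with _ | ⟨⟨t⟩⟩
    · exact isInitialOfIsEmpty.hom_ext _ _
    · rw [← hγ (g t), Category.assoc, hglue, hγf]

end AlgebraicGeometry

theorem stmt2_general (S : Scheme)
    [IsIntegral S]
    (hnormal : ∀ s : S, IsIntegrallyClosed (S.presheaf.stalk s))
    (V Vt : Scheme)
    (v : Vt ⟶ V) [IsFinite v]
    (h : S ⟶ V)
    (S' : S.Opens) (hS' : (S' : Set S).Nonempty)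
    (ht' : S'.toScheme ⟶ Vt) (hlift : ht' ≫ v = S'.ι ≫ h) :
    ∃! ht : S ⟶ Vt, ht ≫ v = h ∧ S'.ι ≫ ht = ht' := by
  have hη : genericPoint S ∈ S' :=
    ((genericPoint_spec S).mem_open_set_iff S'.2).mpr (by simpa using hS')
  set γ := S'.fromSpecStalkOfMem (genericPoint S) hη
  have hγ : γ ≫ S'.ι = S.fromSpecStalk (genericPoint S) := Scheme.Opens.fromSpecStalkOfMem_ι ..
  have : IsDominant (γ ≫ S'.ι) := hγ ▸ inferInstance
  have : IsDominant γ := IsDominant.of_comp_of_isOpenImmersion (g := S'.ι) γ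
  have : IsDominant S'.ι := Opens.isDominant_ι (S'.2.dense (by simpa using hS'))
  obtain ⟨ht, htv, hgen⟩ := Scheme.exists_lift_of_isDominant_of_local_lifts _ v h (γ ≫ ht') fun s ↦
    Scheme.exists_local_lift_of_isFinite v h _
      (by rw [Category.assoc, hlift, reassoc_of% hγ]) s (hnormal s)
  have hrestrict : S'.ι ≫ ht = ht' :=
    ext_of_isDominant_of_isSeparated v (by rw [Category.assoc, htv, hlift]) γ
      (by rw [reassoc_of% hγ, hgen])
  refine ⟨ht, ⟨htv, hrestrict⟩, fun g ⟨hgv, hg⟩ ↦ ?_⟩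
  exact ext_of_isDominant_of_isSeparated v (hgv.trans htv.symm) S'.ι (hg.trans hrestrict.symm)

/-- Lemma 7.3 of the paper.
Let `S` be a normal integral scheme over a field `k` (normal: all stalks are integrally
closed domains).  Let `V`, `Ṽ` be `S`-schemes and `v : Ṽ ⟶ V` a finite `S`-morphism.
Let `h : S ⟶ V` be a section of the structural morphism `V ⟶ S`.  If on a nonempty open
subscheme `S' ⊆ S` the restriction of `h` lifts through `v` via `h̃' : S' ⟶ Ṽ`, then
`h̃'` extends uniquely to a morphism `h̃ : S ⟶ Ṽ` with `h̃ ≫ v = h` and `h̃ ∣_{S'} = h̃'`. -/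
theorem stmt2 (k : Type) [Field k] (S : Scheme)
    (structS : S ⟶ Spec (CommRingCat.of k))
    [IsIntegral S]
    (hnormal : ∀ s : S, IsIntegrallyClosed (S.presheaf.stalk s))
    (V Vt : Scheme) (pV : V ⟶ S) (pVt : Vt ⟶ S)
    (v : Vt ⟶ V) [IsFinite v] (hv : v ≫ pV = pVt)
    (h : S ⟶ V) (hsec : h ≫ pV = 𝟙 S)
    (S' : S.Opens) (hS' : (S' : Set S).Nonempty)
    (ht' : S'.toScheme ⟶ Vt) (hlift : ht' ≫ v = S'.ι ≫ h) :
    ∃! ht : S ⟶ Vt, ht ≫ v = h ∧ S'.ι ≫ ht = ht' :=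
  stmt2_general S hnormal V Vt v h S' hS' ht' hlift
end

section
/- Let S be a normal integral scheme and let Z be an integral scheme equipped with a finite morphism p : Z → S. Suppose there exists a nonempty (hence dense) open subset U of S such that the restriction of p to p⁻¹(U) is an isomorphism onto U. Then p : Z → S is an isomorphism. -/
/-!
Over an affine open `V = Spec B` of `S`, the preimage `p⁻¹ V = Spec A` is affine with `A` finite
over `B`. Since `p` is an isomorphism over the dense open `U`, it sends the generic point of `Z` to
that of `S` and induces an isomorphism of function fields, so `A` embeds into `Frac B` over `B`.
Being finite, `A` is integral over `B`, and `B` is integrally closed because its localizations at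
maximal ideals are stalks of `S`; hence `B → A` is bijective, and `p` is an isomorphism locally on
`S`.
-/

open AlgebraicGeometry CategoryTheory

theorem IsIntegrallyClosed.bijective_of_finite_of_comp_eq_algebraMap
    {B A K : Type*} [CommRing B] [CommRing A] [CommRing K] [Algebra B K] [IsFractionRing B K]
    [IsIntegrallyClosed B] {φ : B →+* A} (hφ : φ.Finite) {j : A →+* K}
    (hj : Function.Injective j) (hjφ : j.comp φ = algebraMap B K) : Function.Bijective φ := by
  refine ⟨.of_comp (f := j) (by rw [← RingHom.coe_comp, hjφ]; exact IsFractionRing.injective B K),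
    fun a ↦ ?_⟩
  have : IsIntegral B (j a) := by rw [_root_.IsIntegral, ← hjφ]; exact (hφ.to_isIntegral a).map j
  obtain ⟨b, hb⟩ := IsIntegrallyClosed.isIntegral_iff.mp this
  exact ⟨b, hj (by rw [← hb, ← hjφ, RingHom.comp_apply])⟩

namespace AlgebraicGeometry

theorem IsAffineOpen.isIntegrallyClosed {X : Scheme} {V : X.Opens} (hV : IsAffineOpen V)
    [IsDomain Γ(X, V)] (h : ∀ x ∈ V, IsIntegrallyClosed (X.presheaf.stalk x)) :
    IsIntegrallyClosed Γ(X, V) := by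
  refine IsIntegrallyClosed.of_localization_maximal fun m _ hm ↦ ?_
  let y : PrimeSpectrum Γ(X, V) := ⟨m, hm.isPrime⟩
  have hyV : hV.fromSpec y ∈ V := hV.range_fromSpec.subset ⟨y, rfl⟩
  let := X.presheaf.algebra_section_stalk ⟨_, hyV⟩
  have : IsLocalization.AtPrime (X.presheaf.stalk (hV.fromSpec y)) m :=
    hV.isLocalization_stalk' y hyV
  have := h _ hyV
  exact .of_equiv (IsLocalization.algEquiv m.primeCompl (X.presheaf.stalk (hV.fromSpec y))
    (Localization.AtPrime m)).toRingEquiv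

theorem genericPoint_mem {X : Scheme} [IrreducibleSpace X] (U : X.Opens) [Nonempty U] :
    genericPoint X ∈ U :=
  ((genericPoint_spec X).mem_open_set_iff U.isOpen).mpr (by simpa using ‹Nonempty U›)

instance {X Y : Scheme} (f : X ⟶ Y) (U : Y.Opens) [Nonempty U] [IsIso (f ∣_ U)] :
    Nonempty (f ⁻¹ᵁ U) := ⟨inv (f ∣_ U) (Classical.arbitrary U)⟩

theorem map_genericPoint_of_isIso_morphismRestrict {X Y : Scheme} [IsIntegral X] [IsIntegral Y]
    (f : X ⟶ Y) (U : Y.Opens) [Nonempty U] [IsIso (f ∣_ U)] :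
    f (genericPoint X) = genericPoint Y := by
  have : IsOpenImmersion ((f ⁻¹ᵁ U).ι ≫ f) := by rw [← morphismRestrict_ι]; infer_instance
  rw [← genericPoint_eq_of_isOpenImmersion (f ⁻¹ᵁ U).ι, ← Scheme.Hom.comp_apply]
  exact genericPoint_eq_of_isOpenImmersion _

theorem isIso_stalkMap_genericPoint_of_isIso_morphismRestrict {X Y : Scheme} [IsIntegral X]
    (f : X ⟶ Y) (U : Y.Opens) [Nonempty U] [IsIso (f ∣_ U)] :
    IsIso (f.stalkMap (genericPoint X)) := by
  let η : (f ⁻¹ᵁ U).toScheme := ⟨_, genericPoint_mem (f ⁻¹ᵁ U)⟩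
  exact (MorphismProperty.arrow_mk_iso_iff (.isomorphisms _) (morphismRestrictStalkMap f U η)).mp
    inferInstance

-- The point is a variable so that `subst` can identify its stalk with the function field.
theorem IsAffineOpen.isFractionRing_stalk_genericPoint {X : Scheme} [IsIntegral X] {V : X.Opens}
    (hV : IsAffineOpen V) (x : V) (hx : (x : X) = genericPoint X) :
    IsFractionRing Γ(X, V) (X.presheaf.stalk x) := by
  obtain ⟨x, hxV⟩ := x
  dsimp only at hx
  subst hx
  have : Nonempty V := ⟨⟨_, hxV⟩⟩
  exact functionField_isFractionRing_of_isAffineOpen X V hV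

theorem isIso_app_of_isFinite_of_isIso_stalkMap_genericPoint {X Y : Scheme} [IsIntegral X]
    [IsIntegral Y] (f : X ⟶ Y) [IsFinite f] (hgen : f (genericPoint X) = genericPoint Y)
    [IsIso (f.stalkMap (genericPoint X))] {V : Y.Opens} (hV : IsAffineOpen V) [Nonempty V]
    [IsIntegrallyClosed Γ(Y, V)] : IsIso (f.app V) := by
  let y : V := ⟨f (genericPoint X), hgen ▸ genericPoint_mem V⟩
  let := Y.presheaf.algebra_section_stalk y
  have := hV.isFractionRing_stalk_genericPoint y hgen
  let j : Γ(X, f ⁻¹ᵁ V) ⟶ Y.presheaf.stalk y :=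
    X.presheaf.germ (f ⁻¹ᵁ V) (genericPoint X) y.2 ≫ inv (f.stalkMap (genericPoint X))
  have hj : Function.Injective j.hom :=
    (ConcreteCategory.bijective_of_isIso (inv (f.stalkMap _))).injective.comp
      (germ_injective_of_isIntegral X _ y.2)
  have hjf : j.hom.comp (f.app V).hom = algebraMap Γ(Y, V) (Y.presheaf.stalk y) := by
    rw [← CommRingCat.hom_comp, ← Category.assoc, ← Scheme.Hom.germ_stalkMap, Category.assoc,
      IsIso.hom_inv_id, Category.comp_id]
    rfl
  rw [ConcreteCategory.isIso_iff_bijective]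
  exact IsIntegrallyClosed.bijective_of_finite_of_comp_eq_algebraMap (f.finite_app V hV) hj hjf

end AlgebraicGeometry

/-- key step in the proof of Lemma 7.3 of the paper.
Let `S` be a normal integral scheme (normal: all stalks are integrally closed domains)
and `Z` an integral scheme with a finite morphism `p : Z ⟶ S`.  If there is a nonempty
open subset `U ⊆ S` over which `p` restricts to an isomorphism `p⁻¹(U) ≅ U`, then `p`
itself is an isomorphism. -/
theorem stmt3 (S Z : Scheme) [IsIntegral S]
    (hnormal : ∀ s : S, IsIntegrallyClosed (S.presheaf.stalk s))
    [IsIntegral Z] (p : Z ⟶ S) [IsFinite p]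
    (U : S.Opens) (hU : (U : Set S).Nonempty) (hiso : IsIso (p ∣_ U)) :
    IsIso p := by
  have : Nonempty U := hU.to_subtype
  have hgen := map_genericPoint_of_isIso_morphismRestrict p U
  have := isIso_stalkMap_genericPoint_of_isIso_morphismRestrict p U
  refine IsZariskiLocalAtTarget.of_forall_exists_morphismRestrict (P := .isomorphisms _)
    fun s ↦ ?_
  obtain ⟨V, hV, hsV, -⟩ := exists_isAffineOpen_mem_and_subset (TopologicalSpace.Opens.mem_top s)
  have : Nonempty V := ⟨⟨s, hsV⟩⟩
  have := hV.isIntegrallyClosed fun x _ ↦ hnormal x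
  exact ⟨V, hsV, (isIso_morphismRestrict_iff_isIso_app p hV).mpr
    (isIso_app_of_isFinite_of_isIso_stalkMap_genericPoint p hgen hV)⟩
end

section
/- Let W and Θ be groups and let W' = W ⋊ Θ be a semidirect product, with π : W' → Θ the canonical projection, and regard W and Θ as subgroups of W'. Suppose W' acts on a set S and let κ ∈ S. Then the following are equivalent: (i) there exists a subgroup Σ' of W' such that π(Σ') = Θ and every element of Σ' fixes κ; (ii) the W-orbit W·κ of κ is stable under the action of Θ, i.e. θ·(W·κ) = W·κ for all θ ∈ Θ. Moreover, when (ii) holds, the full stabilizer of κ in W' is such a subgroup Σ'. -/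
open SemidirectProduct

section Aux

variable {W Θ : Type*} [Group W] [Group Θ] (φ : Θ →* MulAut W)
    {S : Type*} [MulAction (W ⋊[φ] Θ) S] (κ : S)

lemma stmt5_aux_subset
    (h : ∃ Sig : Subgroup (W ⋊[φ] Θ),
        Sig.map (rightHom : W ⋊[φ] Θ →* Θ) = ⊤ ∧ ∀ g ∈ Sig, g • κ = κ) (θ : Θ) :
    (fun s : S => ((inr θ : W ⋊[φ] Θ)) • s) ''
          Set.range (fun w : W => ((inl w : W ⋊[φ] Θ)) • κ) ⊆
        Set.range (fun w : W => ((inl w : W ⋊[φ] Θ)) • κ) := by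
  obtain ⟨Sig, hmap, hfix⟩ := h
  have hθ : θ ∈ Sig.map (rightHom : W ⋊[φ] Θ →* Θ) := hmap ▸ Subgroup.mem_top θ
  obtain ⟨g, hg, hgr⟩ := hθ
  rintro _ ⟨_, ⟨w, rfl⟩, rfl⟩
  refine ⟨φ θ w * g.left⁻¹, ?_⟩
  have hgdecomp : (inl g.left : W ⋊[φ] Θ) * inr θ = g := by
    rw [← hgr]; exact inl_left_mul_inr_right g
  have hκ : (inr θ : W ⋊[φ] Θ) • κ = (inl g.left⁻¹ : W ⋊[φ] Θ) • κ := by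
    have := hfix g hg
    rw [← hgdecomp, mul_smul] at this
    calc (inr θ : W ⋊[φ] Θ) • κ
        = (inl g.left⁻¹ : W ⋊[φ] Θ) • (inl g.left : W ⋊[φ] Θ) • (inr θ : W ⋊[φ] Θ) • κ := by
          rw [← mul_smul, ← map_mul, inv_mul_cancel, map_one, one_smul]
      _ = (inl g.left⁻¹ : W ⋊[φ] Θ) • κ := by rw [this]
  calc (fun w : W => ((inl w : W ⋊[φ] Θ)) • κ) (φ θ w * g.left⁻¹)
      = (inl ((φ θ) w) : W ⋊[φ] Θ) • (inl g.left⁻¹ : W ⋊[φ] Θ) • κ := by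
        show (inl ((φ θ) w * g.left⁻¹) : W ⋊[φ] Θ) • κ = _
        rw [map_mul, mul_smul]
    _ = (inl ((φ θ) w) : W ⋊[φ] Θ) • (inr θ : W ⋊[φ] Θ) • κ := by rw [hκ]
    _ = (inr θ : W ⋊[φ] Θ) • (inl w : W ⋊[φ] Θ) • κ := by
        rw [← mul_smul, ← mul_smul, inl_aut, mul_assoc, ← map_mul, inv_mul_cancel, map_one, mul_one]

end Aux

/-- group-theoretic remark behind Corollary 8.6 and Theorem 10.4 of the
paper.  Let `W' = W ⋊[φ] Θ` act on a set `S` and let `κ ∈ S`.  Then there exists a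
subgroup `Σ'` of `W'` projecting onto `Θ` and fixing `κ` pointwise if and only if the
`W`-orbit of `κ` is stable under `Θ`; moreover, when the orbit is `Θ`-stable, the full
stabilizer of `κ` in `W'` projects onto `Θ`. -/
theorem stmt5 {W Θ : Type*} [Group W] [Group Θ] (φ : Θ →* MulAut W)
    {S : Type*} [MulAction (W ⋊[φ] Θ) S] (κ : S) :
    ((∃ Sig : Subgroup (W ⋊[φ] Θ),
        Sig.map (rightHom : W ⋊[φ] Θ →* Θ) = ⊤ ∧ ∀ g ∈ Sig, g • κ = κ) ↔
      (∀ θ : Θ, (fun s : S => ((inr θ : W ⋊[φ] Θ)) • s) ''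
          Set.range (fun w : W => ((inl w : W ⋊[φ] Θ)) • κ) =
        Set.range (fun w : W => ((inl w : W ⋊[φ] Θ)) • κ))) ∧
    ((∀ θ : Θ, (fun s : S => ((inr θ : W ⋊[φ] Θ)) • s) ''
          Set.range (fun w : W => ((inl w : W ⋊[φ] Θ)) • κ) =
        Set.range (fun w : W => ((inl w : W ⋊[φ] Θ)) • κ)) →
      (MulAction.stabilizer (W ⋊[φ] Θ) κ).map (rightHom : W ⋊[φ] Θ →* Θ) = ⊤) := by
  have h2 : (∀ θ : Θ, (fun s : S => ((inr θ : W ⋊[φ] Θ)) • s) ''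
          Set.range (fun w : W => ((inl w : W ⋊[φ] Θ)) • κ) =
        Set.range (fun w : W => ((inl w : W ⋊[φ] Θ)) • κ)) →
      (MulAction.stabilizer (W ⋊[φ] Θ) κ).map (rightHom : W ⋊[φ] Θ →* Θ) = ⊤ := by
    intro h
    rw [eq_top_iff]
    intro θ _
    have hκmem : κ ∈ Set.range (fun w : W => ((inl w : W ⋊[φ] Θ)) • κ) :=
      ⟨1, by simp⟩
    have : (inr θ : W ⋊[φ] Θ) • κ ∈ Set.range (fun w : W => ((inl w : W ⋊[φ] Θ)) • κ) := by
      rw [← h θ]; exact ⟨κ, hκmem, rfl⟩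
    obtain ⟨w, hw⟩ := this
    refine ⟨inl w⁻¹ * inr θ, ?_, by simp⟩
    show (inl w⁻¹ * inr θ : W ⋊[φ] Θ) • κ = κ
    rw [mul_smul, ← hw, ← mul_smul, ← map_mul, inv_mul_cancel, map_one, one_smul]
  refine ⟨⟨fun hex θ => ?_, fun horb => ?_⟩, h2⟩
  · apply subset_antisymm (stmt5_aux_subset φ κ hex θ)
    rintro x hx
    have : (inr θ⁻¹ : W ⋊[φ] Θ) • x ∈ Set.range (fun w : W => ((inl w : W ⋊[φ] Θ)) • κ) :=
      stmt5_aux_subset φ κ hex θ⁻¹ ⟨x, hx, rfl⟩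
    refine ⟨_, this, ?_⟩
    show (inr θ : W ⋊[φ] Θ) • (inr θ⁻¹ : W ⋊[φ] Θ) • x = x
    rw [← mul_smul, ← map_mul, mul_inv_cancel, map_one, one_smul]
  · exact ⟨MulAction.stabilizer (W ⋊[φ] Θ) κ, h2 horb, fun g hg => hg⟩
end
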